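/- Let $T$ be a bounded operator on a Hilbert space $H$ which decomposes as $T = \bigoplus_{d \in \mathbb{Z}_+} T|_{H_d}$ over finite-dimensional mutually orthogonal closed invariant subspaces $H_d$ with $H = \bigoplus_d H_d$. If $\zeta$ lies in the polynomially convex hull of $\operatorname{sp}(T)$ but not in the polynomially convex hull of the essential spectrum of $T$, then the set $D = \{ d \in \mathbb{Z}_+ : \zeta \in \operatorname{sp}(T|_{H_d}) \}$ is finite. -/

import Mathlib

open scoped InnerProductSpace

/-- The polynomially convex hull of a subset of `ℂ`: all points where every
polynomial is dominated by its sup over the set. -/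
def polyHull (S : Set ℂ) : Set ℂ :=
  {z | ∀ p : Polynomial ℂ, ‖p.eval z‖ ≤ sSup ((fun w => ‖p.eval w‖) '' S)}

/-- The essential spectrum of a bounded operator: the set of `ζ` such that `T - ζ·I`
is not invertible modulo compact operators (the spectrum in the Calkin algebra). -/
def essSpectrum {H : Type*} [NormedAddCommGroup H] [InnerProductSpace ℂ H]
    (T : H →L[ℂ] H) : Set ℂ :=
  {ζ | ¬ ∃ S : H →L[ℂ] H,
      IsCompactOperator (S * (T - ζ • (1 : H →L[ℂ] H)) - 1 : H →L[ℂ] H) ∧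
      IsCompactOperator ((T - ζ • (1 : H →L[ℂ] H)) * S - 1 : H →L[ℂ] H)}


/-!
If `ζ` is a point of the spectrum of infinitely many of the mutually orthogonal blocks, a unit
eigenvector from each block gives an infinite orthonormal family in `ker (T - ζ)`. If `S` inverted
`T - ζ` modulo compact operators, the compact operator `S (T - ζ) - 1` would contain this whole
family in its eigenspace for `-1`. That is impossible, because eigenspaces of a compact operator
for nonzero eigenvalues are finite-dimensional. So `ζ` lies in the essential spectrum. The essential
spectrum is bounded, so it is contained in its polynomially convex hull.
-/

open Module End

theorem essSpectrum_subset_spectrum {H : Type*} [NormedAddCommGroup H] [InnerProductSpace ℂ H]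
    (T : H →L[ℂ] H) : essSpectrum T ⊆ spectrum ℂ T := by
  intro ζ hζ hres
  obtain ⟨u, hu⟩ : IsUnit (algebraMap ℂ _ ζ - T) := hres
  have hTu : T - ζ • 1 = -(u : H →L[ℂ] H) := by
    rw [hu, Algebra.algebraMap_eq_smul_one]; abel
  refine hζ ⟨-(↑u⁻¹ : H →L[ℂ] H), ?_, ?_⟩ <;> simpa [hTu] using isCompactOperator_zero

theorem subset_polyHull_of_isBounded {S : Set ℂ} (hS : Bornology.IsBounded S) :
    S ⊆ polyHull S := fun z hz p =>
  le_csSup (((hS.isCompact_closure.image p.continuous.norm).bddAbove).mono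
    (Set.image_mono subset_closure)) ⟨z, hz, rfl⟩

theorem mem_essSpectrum_of_orthonormal_eigenvectors {H ι : Type*} [NormedAddCommGroup H]
    [InnerProductSpace ℂ H] [CompleteSpace H] [Infinite ι] {T : H →L[ℂ] H} {ζ : ℂ}
    {v : ι → H} (hv : Orthonormal ℂ v) (hTv : ∀ i, T (v i) = ζ • v i) :
    ζ ∈ essSpectrum T := by
  rintro ⟨S, hK, -⟩
  set K := S * (T - ζ • 1) - 1
  have hKv : ∀ i, v i ∈ eigenspace (K : End ℂ H) (-1) := fun i => by simp [K, hTv]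
  have := K.finite_dimensional_eigenspace hK (-1) (by norm_num)
  have hli : LinearIndependent ℂ fun i => (⟨v i, hKv i⟩ : eigenspace (K : End ℂ H) (-1)) :=
    .of_comp (Submodule.subtype _) hv.linearIndependent
  exact Module.Finite.not_linearIndependent_of_infinite _ hli

theorem exists_norm_eq_one_eigenvector_of_mem_spectrum_restrict {𝕜 E : Type*} [RCLike 𝕜]
    [NormedAddCommGroup E] [NormedSpace 𝕜 E] {T : E →ₗ[𝕜] E} {V : Submodule 𝕜 E}
    [FiniteDimensional 𝕜 V] (hV : ∀ x ∈ V, T x ∈ V) {ζ : 𝕜} (hζ : ζ ∈ spectrum 𝕜 (T.restrict hV)) :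
    ∃ x ∈ V, ‖x‖ = 1 ∧ T x = ζ • x := by
  obtain ⟨v, hv⟩ := (HasEigenvalue.of_mem_spectrum hζ).exists_hasEigenvector
  have hv0 : (v : E) ≠ 0 := by simpa using hv.2
  have hTv : T v = ζ • (v : E) := congrArg Subtype.val hv.apply_eq_smul
  refine ⟨(‖(v : E)‖⁻¹ : 𝕜) • (v : E), V.smul_mem _ v.2, ?_, ?_⟩
  · simp [norm_smul, hv0]
  · rw [map_smul, hTv, smul_comm]

theorem stmt3_general {H : Type*} [NormedAddCommGroup H] [InnerProductSpace ℂ H] [CompleteSpace H]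
    (T : H →L[ℂ] H) (V : ℕ → Submodule ℂ H)
    (hfin : ∀ d, FiniteDimensional ℂ (V d))
    (horth : ∀ d e, d ≠ e → ∀ x ∈ V d, ∀ y ∈ V e, ⟪x, y⟫_ℂ = 0)
    (hinv : ∀ d, ∀ x ∈ V d, T x ∈ V d)
    (ζ : ℂ)
    (hζ' : ζ ∉ polyHull (essSpectrum T)) :
    {d : ℕ | ζ ∈ spectrum ℂ ((T : H →ₗ[ℂ] H).restrict (hinv d))}.Finite := by
  set D := {d : ℕ | ζ ∈ spectrum ℂ ((T : H →ₗ[ℂ] H).restrict (hinv d))}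
  by_contra hD
  have : Infinite D := Set.infinite_coe_iff.mpr hD
  have hx (d : D) : ∃ x ∈ V d, ‖x‖ = 1 ∧ T x = ζ • x :=
    have := hfin d
    exists_norm_eq_one_eigenvector_of_mem_spectrum_restrict (hinv d) d.2
  choose x hxV hxnorm hTx using hx
  have hxon : Orthonormal ℂ x :=
    ⟨hxnorm, fun d e hde => horth d e (Subtype.coe_ne_coe.mpr hde) _ (hxV d) _ (hxV e)⟩
  have hess : essSpectrum T ⊆ polyHull (essSpectrum T) :=
    subset_polyHull_of_isBounded ((spectrum.isBounded T).subset (essSpectrum_subset_spectrum T))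
  exact hζ' (hess (mem_essSpectrum_of_orthonormal_eigenvectors hxon hTx))

/-- For a block-diagonal operator `T` as above, if `ζ` lies in the
polynomially convex hull of `sp(T)` but not in the polynomially convex hull of the
essential spectrum of `T`, then `ζ` is an eigenvalue of only finitely many blocks. -/
theorem stmt3 {H : Type*} [NormedAddCommGroup H] [InnerProductSpace ℂ H] [CompleteSpace H]
    (T : H →L[ℂ] H) (V : ℕ → Submodule ℂ H)
    (hfin : ∀ d, FiniteDimensional ℂ (V d))
    (horth : ∀ d e, d ≠ e → ∀ x ∈ V d, ∀ y ∈ V e, ⟪x, y⟫_ℂ = 0)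
    (hinv : ∀ d, ∀ x ∈ V d, T x ∈ V d)
    (hdense : (⨆ d, V d).topologicalClosure = ⊤)
    (ζ : ℂ) (hζ : ζ ∈ polyHull (spectrum ℂ T))
    (hζ' : ζ ∉ polyHull (essSpectrum T)) :
    {d : ℕ | ζ ∈ spectrum ℂ ((T : H →ₗ[ℂ] H).restrict (hinv d))}.Finite :=
  stmt3_general T V hfin horth hinv ζ hζ'
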